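/- Let T ∈ ℝ, δ ∈ (0,∞), and let c ∈ 𝒢_{T,δ} be continuously differentiable on (T, ∞). Define s(t) := B(t)/A(t) and u(t) := −log A(t). Then for every t ∈ (T, ∞): (a) u''(t)·s(t) − s''(t) = −s'(t)·u'(t) > 0; and (b) (s(t) + s'(t)²/(u''(t)·s(t) − s''(t)))·e^{u(t) − t} = 1/c(t). -/

import Mathlib

open MeasureTheory Filter Set

/-- `Afun T δ c t = (1/δ)·c(T)e^{-T} + ∫_T^t c(t₁)e^{-t₁} dt₁`. -/
noncomputable def Afun (T δ : ℝ) (c : ℝ → ℝ) (t : ℝ) : ℝ :=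
  (1 / δ) * c T * Real.exp (-T) + ∫ t₁ in T..t, c t₁ * Real.exp (-t₁)

/-- `Bfun T δ c t = ∫_T^t Afun T δ c t₂ dt₂ + (1/δ²)·c(T)e^{-T}`. -/
noncomputable def Bfun (T δ : ℝ) (c : ℝ → ℝ) (t : ℝ) : ℝ :=
  (∫ t₂ in T..t, Afun T δ c t₂) + (1 / δ ^ 2) * c T * Real.exp (-T)

/-- The class `𝒢_{T,δ}` of Guan–Zhou: continuous positive functions `c` on `[T,∞)` with
`∫_T^∞ c(t)e^{-t} dt < ∞` satisfying the key inequality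
`A(t)² > c(t)e^{-t}·B(t)` for every `t > T`. -/
def GTdelta (T δ : ℝ) (c : ℝ → ℝ) : Prop :=
  ContinuousOn c (Set.Ici T) ∧ (∀ t ∈ Set.Ici T, 0 < c t) ∧
  MeasureTheory.IntegrableOn (fun t => c t * Real.exp (-t)) (Set.Ici T) ∧
  ∀ t, T < t → (Afun T δ c t) ^ 2 > c t * Real.exp (-t) * Bfun T δ c t

/-!
Since `A' = c e^{-t}` and `B' = A`, the quotient `s = B / A` satisfies the Riccati-type relation
`s' = 1 + s u'` with `u = -log A`, and differentiating it once more gives (a). Moreover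
`-s' u' = (1 - B c e^{-t} / A²) · c e^{-t} / A`, which is positive exactly by the inequality
defining `𝒢_{T,δ}`. For (b), (a) and the same relation give
`s + s'² / (-s' u') = -1 / u' = A / (c e^{-t})`, while `e^{u - t} = e^{-t} / A`.
-/

open Topology

theorem deriv_deriv_mul_sub_deriv_deriv_of_deriv_eq_one_add_mul {s u : ℝ → ℝ} {t : ℝ}
    (h : deriv s =ᶠ[𝓝 t] fun x => 1 + s x * deriv u x)
    (hs : DifferentiableAt ℝ s t) (hu : DifferentiableAt ℝ (deriv u) t) :
    deriv (deriv u) t * s t - deriv (deriv s) t = -(deriv s t * deriv u t) := by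
  have hs' : HasDerivAt (deriv s) (deriv s t * deriv u t + s t * deriv (deriv u) t) t :=
    ((hs.hasDerivAt.mul hu.hasDerivAt).const_add 1).congr_of_eventuallyEq h
  rw [hs'.deriv]
  ring

theorem add_sq_div_neg_mul_eq_neg_inv {s s' u' : ℝ} (h : s' = 1 + s * u') (hu' : u' ≠ 0) :
    s + s' ^ 2 / -(s' * u') = -u'⁻¹ := by
  field_simp
  linear_combination -h

section GuanZhou

variable {T δ : ℝ} {c : ℝ → ℝ} {t : ℝ}

theorem Afun_pos (hδ : 0 < δ) (hc_pos : ∀ t ∈ Ici T, 0 < c t) (ht : T ≤ t) :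
    0 < Afun T δ c t := by
  have hcT := hc_pos T self_mem_Ici
  have hint : 0 ≤ ∫ x in T..t, c x * Real.exp (-x) :=
    intervalIntegral.integral_nonneg ht fun x hx => (mul_pos (hc_pos x hx.1) (Real.exp_pos _)).le
  unfold Afun
  positivity

variable (δ) in
theorem hasDerivAt_Afun (hc : ContinuousOn c (Ici T)) (ht : T < t) :
    HasDerivAt (Afun T δ c) (c t * Real.exp (-t)) t := by
  have hg : ContinuousOn (fun x => c x * Real.exp (-x)) (Ici T) := by fun_prop
  refine (intervalIntegral.integral_hasDerivAt_right ?_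
    ((hg.mono Ioi_subset_Ici_self).stronglyMeasurableAtFilter isOpen_Ioi t ht)
    (hg.continuousAt (Ici_mem_nhds ht))).const_add _
  exact (hg.mono Icc_subset_Ici_self).intervalIntegrable_of_Icc ht.le

variable (δ) in
theorem hasDerivAt_Bfun (hc : ContinuousOn c (Ici T)) (ht : T < t) :
    HasDerivAt (Bfun T δ c) (Afun T δ c t) t := by
  have hg : IntervalIntegrable (fun x => c x * Real.exp (-x)) volume T t :=
    ((hc.mono Icc_subset_Ici_self).mul (by fun_prop)).intervalIntegrable_of_Icc ht.le
  have hA : ContinuousOn (Afun T δ c) (uIcc T t) :=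
    continuousOn_const.add (intervalIntegral.continuousOn_primitive_interval' hg left_mem_uIcc)
  refine (intervalIntegral.integral_hasDerivAt_right hA.intervalIntegrable ?_ ?_).add_const _
  · exact ContinuousAt.stronglyMeasurableAtFilter isOpen_Ioi
      (fun x hx => (hasDerivAt_Afun δ hc hx).continuousAt) t ht
  · exact (hasDerivAt_Afun δ hc ht).continuousAt

theorem hasDerivAt_neg_log_Afun (hδ : 0 < δ) (hc : ContinuousOn c (Ici T))
    (hc_pos : ∀ t ∈ Ici T, 0 < c t) (ht : T < t) :
    HasDerivAt (fun x => -Real.log (Afun T δ c x))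
      (-(c t * Real.exp (-t) / Afun T δ c t)) t :=
  ((hasDerivAt_Afun δ hc ht).log (Afun_pos hδ hc_pos ht.le).ne').neg

theorem hasDerivAt_Bfun_div_Afun (hδ : 0 < δ) (hc : ContinuousOn c (Ici T))
    (hc_pos : ∀ t ∈ Ici T, 0 < c t) (ht : T < t) :
    HasDerivAt (fun x => Bfun T δ c x / Afun T δ c x)
      (1 + Bfun T δ c t / Afun T δ c t * -(c t * Real.exp (-t) / Afun T δ c t)) t := by
  have hA := (Afun_pos hδ hc_pos ht.le).ne'
  exact ((hasDerivAt_Bfun δ hc ht).div (hasDerivAt_Afun δ hc ht) hA).congr_deriv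
    (by field_simp; ring)

end GuanZhou

/-- **Second-order identities for `s` and `u`.**
For `c ∈ 𝒢_{T,δ}` which is `C¹` on `(T,∞)`, with `s(t) = B(t)/A(t)` and `u(t) = −log A(t)`,
for every `t > T`: (a) `u''(t)s(t) − s''(t) = −s'(t)u'(t) > 0`;
(b) `(s(t) + s'(t)²/(u''(t)s(t) − s''(t)))·e^{u(t)−t} = 1/c(t)`. -/
theorem s_u_second_order_identities (T δ : ℝ) (hδ : 0 < δ) (c : ℝ → ℝ) (hc : GTdelta T δ c)
    (hc1 : ContDiffOn ℝ 1 c (Set.Ioi T))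
    (s u : ℝ → ℝ)
    (hs : ∀ t, s t = Bfun T δ c t / Afun T δ c t)
    (hu : ∀ t, u t = -Real.log (Afun T δ c t)) :
    ∀ t, T < t →
      (deriv (deriv u) t * s t - deriv (deriv s) t = -(deriv s t * deriv u t) ∧
        0 < -(deriv s t * deriv u t)) ∧
      (s t + (deriv s t) ^ 2 / (deriv (deriv u) t * s t - deriv (deriv s) t)) *
          Real.exp (u t - t) = 1 / c t := by
  obtain ⟨hcont, hpos, -, hineq⟩ := hc
  intro t ht
  have hnear : ∀ᶠ x in 𝓝 t, T < x := Ioi_mem_nhds ht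
  have hA := Afun_pos hδ hpos ht.le
  have hu' : ∀ x, T < x → HasDerivAt u (-(c x * Real.exp (-x) / Afun T δ c x)) x :=
    fun x hx => funext hu ▸ hasDerivAt_neg_log_Afun hδ hcont hpos hx
  have hs' : ∀ x, T < x → HasDerivAt s (1 + s x * deriv u x) x := fun x hx => by
    rw [funext hs, (hu' x hx).deriv]
    exact hasDerivAt_Bfun_div_Afun hδ hcont hpos hx
  have hu'' : DifferentiableAt ℝ (deriv u) t := by
    refine DifferentiableAt.congr_of_eventuallyEq ?_ (hnear.mono fun x hx => (hu' x hx).deriv)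
    have hc' := (hc1.differentiableOn one_ne_zero t ht).differentiableAt hnear
    exact ((hc'.mul (by fun_prop)).div
      (hasDerivAt_Afun δ hcont ht).differentiableAt hA.ne').neg
  have hsu := deriv_deriv_mul_sub_deriv_deriv_of_deriv_eq_one_add_mul
    (hnear.mono fun x hx => (hs' x hx).deriv) (hs' t ht).differentiableAt hu''
  have hst : deriv s t = 1 + s t * deriv u t := (hs' t ht).deriv
  have hct := hpos t ht.le
  have hgA : 0 < c t * Real.exp (-t) / Afun T δ c t := by positivity
  refine ⟨⟨hsu, ?_⟩, ?_⟩
  · have hsg : s t * (c t * Real.exp (-t) / Afun T δ c t) < 1 := by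
      rw [hs, div_mul_div_comm, div_lt_one (by positivity)]
      linarith [hineq t ht]
    rw [hst, (hu' t ht).deriv]
    nlinarith
  · rw [hsu, add_sq_div_neg_mul_eq_neg_inv hst ((hu' t ht).deriv ▸ (neg_neg_of_pos hgA).ne),
      (hu' t ht).deriv, hu]
    simp only [Real.exp_sub, Real.exp_neg, Real.exp_log hA]
    field_simp
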